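/- Let κ < 1/2 be real and m real, and let f_{κ,m}(x) = x^{−1} W_{κ,im}(x) for x > 0, with W_{κ,im} given by its (complex) integral representation. Then f_{κ,m} is twice differentiable on (0,∞) and satisfies the eigenvalue equation −(d/dx)( x² f_{κ,m}'(x) ) + (x/2 − κ)² f_{κ,m}(x) = (1/4 + m² + κ²) f_{κ,m}(x) for all x > 0. -/

import Mathlib

/-!
On `x > 0` one has `f x = x ^ (m I - 1/2) * Γ(m I - κ + 1/2)⁻¹ * M₀ x`, where
`Mₙ x = ∫_{1/2}^∞ sⁿ e^{-sx} (s + 1/2)^a (s - 1/2)^b ds` with `a = κ + m I - 1/2` and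
`b = m I - κ - 1/2`.
The integrals converge locally uniformly in `x > 0` because `Re b = -κ - 1/2 > -1`, so
differentiating under the integral sign gives `Mₙ' = -Mₙ₊₁`. Integrating the `s`-derivative of
`(s + 1/2)^(a+1) (s - 1/2)^(b+1) e^{-sx}`, which vanishes at both ends, gives
`x M₂ = (a + b + 2) M₁ + ((b - a)/2 + x/4) M₀`: the function `M₀` solves the Kummer-type equation
`x g'' + (2 m I + 1) g' + (κ - x/4) g = 0`. Multiplying a solution by `x ^ (m I - 1/2)` turns this
equation into the eigenvalue equation for `L_{-κ}`.
-/

open MeasureTheory Set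

/-- The Whittaker function `W_{κ,im}(x)` with purely imaginary second index, given by
its complex integral representation (principal-branch powers), valid for `κ < 1/2`
and `x > 0`. -/
noncomputable def whittakerWI (κ m x : ℝ) : ℂ :=
  (x : ℂ) ^ ((m : ℂ) * Complex.I + 1/2) /
      Complex.Gamma ((m : ℂ) * Complex.I - (κ : ℂ) + 1/2) *
    ∫ s in Ioi (1/2 : ℝ),
      Complex.exp (-(s : ℂ) * (x : ℂ)) *
        ((s : ℂ) + 1/2) ^ ((κ : ℂ) + (m : ℂ) * Complex.I - 1/2) *
        ((s : ℂ) - 1/2) ^ ((m : ℂ) * Complex.I - (κ : ℂ) - 1/2)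

open Filter Complex Asymptotics
open scoped Topology

namespace Whittaker

noncomputable def integrand (a b : ℂ) (n : ℕ) (x s : ℝ) : ℂ :=
  (s : ℂ) ^ n * cexp (-(s : ℂ) * x) * (((s : ℂ) + 1/2) ^ a * ((s : ℂ) - 1/2) ^ b)

noncomputable def moment (a b : ℂ) (n : ℕ) (x : ℝ) : ℂ :=
  ∫ s in Ioi (1/2 : ℝ), integrand a b n x s

noncomputable def envelope (p q : ℝ) (n : ℕ) (t s : ℝ) : ℝ :=
  s ^ n * Real.exp (-s * t) * ((s + 1/2) ^ p * (s - 1/2) ^ q)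

theorem norm_integrand (a b : ℂ) (n : ℕ) (x : ℝ) {s : ℝ} (hs : 1/2 < s) :
    ‖integrand a b n x s‖ = envelope a.re b.re n x s := by
  have e1 : (s : ℂ) + 1/2 = ((s + 1/2 : ℝ) : ℂ) := by push_cast; ring
  have e2 : (s : ℂ) - 1/2 = ((s - 1/2 : ℝ) : ℂ) := by push_cast; ring
  have e3 : -(s : ℂ) * x = ((-s * x : ℝ) : ℂ) := by push_cast; ring
  rw [integrand, envelope, e1, e2, e3, norm_mul, norm_mul, norm_mul, norm_pow, norm_exp,
    norm_cpow_eq_rpow_re_of_pos (by linarith), norm_cpow_eq_rpow_re_of_pos (by linarith),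
    norm_real, Real.norm_of_nonneg (by linarith), ofReal_re]

theorem tendsto_envelope_atTop (p q : ℝ) (n : ℕ) {t : ℝ} (ht : 0 < t) :
    Tendsto (envelope p q n t) atTop (𝓝 0) := by
  have decay (r c : ℝ) : Tendsto (fun s : ℝ => (s + c) ^ r * Real.exp (-(t/3) * (s + c)))
      atTop (𝓝 0) :=
    (tendsto_rpow_mul_exp_neg_mul_atTop_nhds_zero r _ (by positivity)).comp
      (tendsto_atTop_add_const_right _ c tendsto_id)
  have h := ((decay n 0).mul (decay p (1/2))).mul (decay q (-(1/2)))
  simp only [mul_zero] at h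
  refine h.congr fun s => ?_
  simp only [envelope, add_zero, Real.rpow_natCast, ← sub_eq_add_neg]
  have hexp : Real.exp (-(t/3) * s) * Real.exp (-(t/3) * (s + 1/2)) *
      Real.exp (-(t/3) * (s - 1/2)) = Real.exp (-s * t) := by
    rw [← Real.exp_add, ← Real.exp_add]; ring_nf
  rw [← hexp]
  ring

theorem continuousOn_envelope (p q : ℝ) (n : ℕ) (t : ℝ) :
    ContinuousOn (envelope p q n t) (Ioi (1/2)) := by
  intro s (hs : 1/2 < s)
  refine ContinuousAt.continuousWithinAt ?_
  unfold envelope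
  have : ContinuousAt (fun s : ℝ => (s + 1/2) ^ p) s :=
    (continuousAt_id.add continuousAt_const).rpow_const (Or.inl (by simp; linarith))
  have : ContinuousAt (fun s : ℝ => (s - 1/2) ^ q) s :=
    (continuousAt_id.sub continuousAt_const).rpow_const (Or.inl (by simp; linarith))
  fun_prop

theorem integrableOn_envelope (p : ℝ) {q : ℝ} (hq : -1 < q) (n : ℕ) {t : ℝ} (ht : 0 < t) :
    IntegrableOn (envelope p q n t) (Ioi (1/2)) := by
  rw [← Ioc_union_Ioi_eq_Ioi (show (1/2 : ℝ) ≤ 1 by norm_num)]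
  refine IntegrableOn.union ?_ ?_
  · have hsing : IntegrableOn (fun s : ℝ => (s - 1/2) ^ q) (Ioc (1/2) 1) := by
      have := (intervalIntegral.intervalIntegrable_rpow' (a := 0) (b := 1/2) hq).comp_sub_right
        (1/2)
      norm_num at this
      rwa [intervalIntegrable_iff_integrableOn_Ioc_of_le (by norm_num)] at this
    have hreg : ContinuousOn (fun s : ℝ => s ^ n * Real.exp (-s * t) * (s + 1/2) ^ p)
        (Icc (1/2) 1) := by
      intro s hs
      have : ContinuousAt (fun s : ℝ => (s + 1/2) ^ p) s :=
        (continuousAt_id.add continuousAt_const).rpow_const (Or.inl (by simp; linarith [hs.1]))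
      exact ContinuousAt.continuousWithinAt (by fun_prop)
    refine (hsing.mul_continuousOn_of_subset hreg measurableSet_Ioc isCompact_Icc
      Ioc_subset_Icc_self).congr_fun (fun s _ => ?_) measurableSet_Ioc
    simp only [envelope]
    ring
  · refine integrable_of_isBigO_exp_neg (half_pos ht)
      ((continuousOn_envelope p q n t).mono fun s (hs : 1 ≤ s) => by simp; linarith) ?_
    have hsplit : envelope p q n t = fun s => envelope p q n (t/2) s * Real.exp (-(t/2) * s) := by
      ext s
      simp only [envelope]
      rw [show -s * t = -s * (t/2) + -(t/2) * s by ring, Real.exp_add]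
      ring
    rw [hsplit]
    simpa using ((tendsto_envelope_atTop p q n (half_pos ht)).isBigO_one ℝ).mul
      (isBigO_refl (fun s => Real.exp (-(t/2) * s)) atTop)

theorem continuousAt_integrand (a b : ℂ) (n : ℕ) (x : ℝ) {s : ℝ}
    (hs : 1/2 < s ∨ 1/2 ≤ s ∧ 0 < b.re) : ContinuousAt (integrand a b n x) s := by
  have hplus : ContinuousAt (fun s : ℝ => ((s : ℂ) + 1/2) ^ a) s :=
    (continuousAt_cpow_const (Or.inl (by simp; grind))).comp (by fun_prop)
  have hminus : ContinuousAt (fun s : ℝ => ((s : ℂ) - 1/2) ^ b) s := by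
    refine ContinuousAt.comp (g := fun z : ℂ => z ^ b) ?_ (by fun_prop)
    rcases hs with hs | ⟨hs, hb⟩
    · exact continuousAt_cpow_const (Or.inl (by simp; linarith))
    · exact continuousAt_cpow_const_of_re_pos (Or.inl (by simp; linarith)) hb
  unfold integrand
  fun_prop

theorem continuousOn_integrand (a b : ℂ) (n : ℕ) (x : ℝ) :
    ContinuousOn (integrand a b n x) (Ioi (1/2)) :=
  fun _ hs => (continuousAt_integrand a b n x (Or.inl hs)).continuousWithinAt

theorem integrableOn_integrand (a : ℂ) {b : ℂ} (hb : -1 < b.re) (n : ℕ) {x : ℝ}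
    (hx : 0 < x) :
    IntegrableOn (integrand a b n x) (Ioi (1/2)) :=
  (integrableOn_envelope a.re hb n hx).mono'
    ((continuousOn_integrand a b n x).aestronglyMeasurable measurableSet_Ioi)
    ((ae_restrict_iff' measurableSet_Ioi).2 (ae_of_all _ fun _ hs =>
      (norm_integrand a b n x hs).le))

theorem hasDerivAt_integrand (a b : ℂ) (n : ℕ) (x s : ℝ) :
    HasDerivAt (fun y => integrand a b n y s) (-integrand a b (n+1) x s) x := by
  have h := ((((hasDerivAt_id x).ofReal_comp).const_mul (-(s : ℂ))).cexp.const_mul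
    ((s : ℂ) ^ n)).mul_const (((s : ℂ) + 1/2) ^ a * ((s : ℂ) - 1/2) ^ b)
  refine h.congr_deriv ?_
  simp only [integrand, id, ofReal_one]
  ring

theorem hasDerivAt_moment (a : ℂ) {b : ℂ} (hb : -1 < b.re) (n : ℕ) {x : ℝ} (hx : 0 < x) :
    HasDerivAt (moment a b n) (-moment a b (n+1) x) x := by
  have hball : Metric.ball x (x/2) ⊆ Ici (x/2) := fun y hy => by
    have := (abs_lt.1 (Metric.mem_ball.1 hy)).1
    simp only [mem_Ici]; linarith
  have hdom : ∀ᵐ s ∂volume.restrict (Ioi (1/2 : ℝ)), ∀ y ∈ Metric.ball x (x/2),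
      ‖-integrand a b (n+1) y s‖ ≤ envelope a.re b.re (n+1) (x/2) s := by
    refine (ae_restrict_iff' measurableSet_Ioi).2 (ae_of_all _ fun s (hs : 1/2 < s) y hy => ?_)
    rw [norm_neg, norm_integrand a b (n+1) y hs]
    have : Real.exp (-s * y) ≤ Real.exp (-s * (x/2)) :=
      Real.exp_le_exp.2 (by nlinarith [mem_Ici.1 (hball hy)])
    simp only [envelope]
    gcongr
  have h := hasDerivAt_integral_of_dominated_loc_of_deriv_le (Metric.ball_mem_nhds x (half_pos hx))
    (Eventually.of_forall fun y => (continuousOn_integrand a b n y).aestronglyMeasurable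
      measurableSet_Ioi)
    (integrableOn_integrand a hb n hx)
    ((continuousOn_integrand a b (n+1) x).aestronglyMeasurable measurableSet_Ioi).neg
    hdom (integrableOn_envelope a.re hb (n+1) (half_pos hx))
    (ae_of_all _ fun s y _ => hasDerivAt_integrand a b n y s)
  rw [integral_neg] at h
  exact h.2

theorem hasDerivAt_integrand_add_one (a b : ℂ) (x : ℝ) {s : ℝ} (hs : 1/2 < s) :
    HasDerivAt (integrand (a+1) (b+1) 0 x)
      (-x * integrand a b 2 x s + (a + b + 2) * integrand a b 1 x s +
        ((b - a)/2 + x/4) * integrand a b 0 x s) s := by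
  have hplus : (s : ℂ) + 1/2 = ((s + 1/2 : ℝ) : ℂ) := by push_cast; ring
  have hminus : (s : ℂ) - 1/2 = ((s - 1/2 : ℝ) : ℂ) := by push_cast; ring
  have hP : HasDerivAt (fun z : ℂ => (z + 1/2) ^ (a+1)) ((a+1) * ((s : ℂ) + 1/2) ^ a) s := by
    simpa using ((hasDerivAt_id (s : ℂ)).add_const (1/2 : ℂ)).cpow_const (c := a + 1)
      (by rw [id, hplus, ofReal_mem_slitPlane]; linarith)
  have hM : HasDerivAt (fun z : ℂ => (z - 1/2) ^ (b+1)) ((b+1) * ((s : ℂ) - 1/2) ^ b) s := by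
    simpa using ((hasDerivAt_id (s : ℂ)).sub_const (1/2 : ℂ)).cpow_const (c := b + 1)
      (by rw [id, hminus, ofReal_mem_slitPlane]; linarith)
  have hE : HasDerivAt (fun z : ℂ => cexp (-z * x)) (cexp (-s * x) * -x) s := by
    simpa using ((hasDerivAt_id (s : ℂ)).neg.mul_const (x : ℂ)).cexp
  have h := (hE.mul (hP.mul hM)).comp_ofReal
  have hF : integrand (a+1) (b+1) 0 x =
      fun y : ℝ => cexp (-y * x) * (((y : ℂ) + 1/2) ^ (a+1) * ((y : ℂ) - 1/2) ^ (b+1)) := by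
    ext y; simp [integrand]
  rw [hF]
  refine h.congr_deriv ?_
  have hplus0 : (s : ℂ) + 1/2 ≠ 0 := hplus ▸ ofReal_ne_zero.2 (by linarith)
  have hminus0 : (s : ℂ) - 1/2 ≠ 0 := hminus ▸ ofReal_ne_zero.2 (by linarith)
  simp only [Pi.mul_apply, integrand, cpow_add _ _ hplus0, cpow_add _ _ hminus0, cpow_one]
  ring

theorem moment_recurrence (a : ℂ) {b : ℂ} (hb : -1 < b.re) {x : ℝ} (hx : 0 < x) :
    x * moment a b 2 x = (a + b + 2) * moment a b 1 x + ((b - a)/2 + x/4) * moment a b 0 x := by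
  have hb' : 0 < (b+1).re := by simp; linarith
  have hint (n : ℕ) := integrableOn_integrand a hb n hx
  have hbdry : integrand (a+1) (b+1) 0 x (1/2) = 0 := by
    simp [integrand, zero_cpow (show b + 1 ≠ 0 from fun h => by simp [h] at hb')]
  have hinfty : Tendsto (integrand (a+1) (b+1) 0 x) atTop (𝓝 0) := by
    rw [tendsto_zero_iff_norm_tendsto_zero]
    refine (tendsto_envelope_atTop (a+1).re (b+1).re 0 hx).congr' ?_
    filter_upwards [eventually_gt_atTop (1/2 : ℝ)] with s hs
    exact (norm_integrand _ _ 0 x hs).symm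
  have h := integral_Ioi_of_hasDerivAt_of_tendsto
    (continuousAt_integrand (a+1) (b+1) 0 x (Or.inr ⟨le_rfl, hb'⟩)).continuousWithinAt
    (fun s hs => hasDerivAt_integrand_add_one a b x hs)
    ((((hint 2).const_mul _).add ((hint 1).const_mul _)).add ((hint 0).const_mul _)) hinfty
  rw [integral_add, integral_add, integral_const_mul, integral_const_mul, integral_const_mul,
    hbdry, sub_zero] at h
  · simp only [moment]
    linear_combination -h
  all_goals first
    | exact (hint _).const_mul _
    | exact ((hint 2).const_mul _).add ((hint 1).const_mul _)

theorem hasDerivAt_ofReal_cpow (c : ℂ) {x : ℝ} (hx : 0 < x) :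
    HasDerivAt (fun t : ℝ => (t : ℂ) ^ c) (c * (x : ℂ) ^ c / x) x := by
  have h := ((hasDerivAt_id' (x : ℂ)).cpow_const (c := c) (by simpa using hx)).comp_ofReal
  rw [cpow_sub _ _ (ofReal_ne_zero.2 hx.ne'), cpow_one, mul_one] at h
  exact h.congr_deriv (by ring)

section CpowMul

variable {c : ℂ} {f g g' g'' : ℝ → ℂ}

theorem hasDerivAt_of_eq_cpow_mul (hf : ∀ x > 0, f x = (x : ℂ) ^ c * g x)
    (hg : ∀ x > 0, HasDerivAt g (g' x) x) {x : ℝ} (hx : 0 < x) :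
    HasDerivAt f ((x : ℂ) ^ c * (c * g x / x + g' x)) x := by
  have h := (hasDerivAt_ofReal_cpow c hx).mul (hg x hx)
  refine (h.congr_of_eventuallyEq ?_).congr_deriv (by ring)
  filter_upwards [Ioi_mem_nhds hx] with u hu using hf u hu

theorem differentiableAt_deriv_of_eq_cpow_mul (hf : ∀ x > 0, f x = (x : ℂ) ^ c * g x)
    (hg : ∀ x > 0, HasDerivAt g (g' x) x) (hg' : ∀ x > 0, HasDerivAt g' (g'' x) x)
    {x : ℝ} (hx : 0 < x) : DifferentiableAt ℝ (deriv f) x := by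
  have h : DifferentiableAt ℝ (fun u : ℝ => (u : ℂ) ^ c * (c * g u / u + g' u)) x :=
    (hasDerivAt_ofReal_cpow c hx).differentiableAt.mul
      ((((hg x hx).differentiableAt.const_mul c).div ofRealCLM.differentiableAt
        (ofReal_ne_zero.2 hx.ne')).add (hg' x hx).differentiableAt)
  refine h.congr_of_eventuallyEq ?_
  filter_upwards [Ioi_mem_nhds hx] with u hu using (hasDerivAt_of_eq_cpow_mul hf hg hu).deriv

theorem hasDerivAt_sq_mul_deriv_of_eq_cpow_mul (hf : ∀ x > 0, f x = (x : ℂ) ^ c * g x)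
    (hg : ∀ x > 0, HasDerivAt g (g' x) x) (hg' : ∀ x > 0, HasDerivAt g' (g'' x) x)
    {x : ℝ} (hx : 0 < x) :
    HasDerivAt (fun u : ℝ => (u : ℂ) ^ 2 * deriv f u)
      ((x : ℂ) ^ c * ((c ^ 2 + c) * g x + (2 * c + 2) * x * g' x + x ^ 2 * g'' x)) x := by
  have hx0 : (x : ℂ) ≠ 0 := ofReal_ne_zero.2 hx.ne'
  have hid := (hasDerivAt_id' x).ofReal_comp
  have h := (hasDerivAt_ofReal_cpow c hx).mul
    (((hid.const_mul c).mul (hg x hx)).add ((hid.pow 2).mul (hg' x hx)))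
  refine (h.congr_of_eventuallyEq ?_).congr_deriv ?_
  · filter_upwards [Ioi_mem_nhds hx] with u hu
    have hu0 : (u : ℂ) ≠ 0 := ofReal_ne_zero.2 hu.ne'
    rw [(hasDerivAt_of_eq_cpow_mul hf hg hu).deriv]
    simp only [Pi.mul_apply, Pi.add_apply, Pi.pow_apply]
    field_simp
  · simp only [Pi.mul_apply, Pi.add_apply, Pi.pow_apply, ofReal_one]
    field_simp
    ring

theorem eigen_of_eq_cpow_mul_of_kummer {κ m : ℝ}
    (hf : ∀ x > 0, f x = (x : ℂ) ^ ((m : ℂ) * I - 1/2) * g x)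
    (hg : ∀ x > 0, HasDerivAt g (g' x) x) (hg' : ∀ x > 0, HasDerivAt g' (g'' x) x)
    (hkummer : ∀ x > 0, x * g'' x + (2 * m * I + 1) * g' x + (κ - x/4) * g x = 0) :
    (∀ x > (0:ℝ), DifferentiableAt ℝ f x) ∧
    (∀ x > (0:ℝ), DifferentiableAt ℝ (deriv f) x) ∧
    ∀ x > (0:ℝ),
      -deriv (fun u : ℝ => ((u : ℂ)) ^ 2 * deriv f u) x +
          (((x / 2 - κ : ℝ) : ℂ)) ^ 2 * f x =
        (((1/4 + m ^ 2 + κ ^ 2 : ℝ) : ℂ)) * f x := by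
  refine ⟨fun x hx => (hasDerivAt_of_eq_cpow_mul hf hg hx).differentiableAt,
    fun x hx => differentiableAt_deriv_of_eq_cpow_mul hf hg hg' hx, fun x hx => ?_⟩
  -- for `c = m * I - 1/2` one has `c ^ 2 + c = -(m ^ 2 + 1/4)`, so the eigenvalue equation is
  -- `-x * x ^ c` times the Kummer equation
  rw [(hasDerivAt_sq_mul_deriv_of_eq_cpow_mul hf hg hg' hx).deriv, hf x hx]
  push_cast
  linear_combination (-(x : ℂ) ^ ((m : ℂ) * I - 1/2) * x) * hkummer x hx +
    (-(x : ℂ) ^ ((m : ℂ) * I - 1/2) * m ^ 2 * g x) * I_sq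

end CpowMul

theorem inv_mul_whittakerWI (κ m : ℝ) {x : ℝ} (hx : 0 < x) :
    (x : ℂ)⁻¹ * whittakerWI κ m x = (x : ℂ) ^ ((m : ℂ) * I - 1/2) *
      ((Gamma ((m : ℂ) * I - κ + 1/2))⁻¹ *
        moment (κ + m * I - 1/2) (m * I - κ - 1/2) 0 x) := by
  have hx0 : (x : ℂ) ≠ 0 := ofReal_ne_zero.2 hx.ne'
  rw [whittakerWI, show (m : ℂ) * I + 1/2 = (m * I - 1/2) + 1 by ring, cpow_add _ _ hx0,
    cpow_one]
  simp only [moment, integrand, pow_zero, one_mul, mul_assoc]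
  field_simp

end Whittaker

open Whittaker in
/-- `f_{κ,m}(x) = x⁻¹ W_{κ,im}(x)` is an eigenfunction of the Sturm–Liouville operator
`L_{-κ} f = -(x² f')' + (x/2 - κ)² f` with eigenvalue `1/4 + m² + κ²`. -/
theorem stmt_13 (κ m : ℝ) (hκ : κ < 1/2)
    (f : ℝ → ℂ) (hf : ∀ x : ℝ, f x = ((x : ℂ))⁻¹ * whittakerWI κ m x) :
    (∀ x > (0:ℝ), DifferentiableAt ℝ f x) ∧
    (∀ x > (0:ℝ), DifferentiableAt ℝ (deriv f) x) ∧
    ∀ x > (0:ℝ),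
      -deriv (fun u : ℝ => ((u : ℂ)) ^ 2 * deriv f u) x +
          (((x / 2 - κ : ℝ) : ℂ)) ^ 2 * f x =
        (((1/4 + m ^ 2 + κ ^ 2 : ℝ) : ℂ)) * f x := by
  have hb : -1 < ((m : ℂ) * I - κ - 1/2).re := by simp; linarith
  have hM (n : ℕ) {x : ℝ} (hx : 0 < x) :=
    (hasDerivAt_moment (κ + m * I - 1/2) hb n hx).const_mul (Gamma ((m : ℂ) * I - κ + 1/2))⁻¹
  refine eigen_of_eq_cpow_mul_of_kummer (fun x hx => by rw [hf, inv_mul_whittakerWI κ m hx])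
    (fun x hx => (hM 0 hx).congr_deriv (mul_neg _ _)) (fun x hx => (hM 1 hx).fun_neg)
    (fun x hx => ?_)
  simp only [zero_add, Nat.reduceAdd]
  linear_combination (Gamma ((m : ℂ) * I - κ + 1/2))⁻¹ *
    moment_recurrence (κ + m * I - 1/2) hb hx
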